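/- Let X = Xᵀ and Y = Yᵀ in ℝ^{n×n} satisfy ker R_X ⊆ ker S_X and ker R_Y ⊆ ker S_Y, and let Δ := X − Y. Then 𝔇(X) − 𝔇(Y) = Δ − A_Yᵀ Δ A_X. -/

import Mathlib

open Matrix

-- The Moore–Penrose pseudoinverse of a real matrix, characterised by the four
-- Penrose equations (it exists and is unique for every real matrix).
open Classical in
noncomputable def mpinv {α β : Type*} [Fintype α] [Fintype β]
    (M : Matrix α β ℝ) : Matrix β α ℝ :=
  if h : ∃ P : Matrix β α ℝ,
      M * P * M = M ∧ P * M * P = P ∧ (M * P)ᵀ = M * P ∧ (P * M)ᵀ = P * M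
  then h.choose else 0

/-- `R_X = R + BᵀXB`. -/
noncomputable def RX {ι κ : Type*} [Fintype ι] [Fintype κ]
    (R : Matrix κ κ ℝ) (B : Matrix ι κ ℝ) (X : Matrix ι ι ℝ) : Matrix κ κ ℝ :=
  R + Bᵀ * X * B

/-- `S_X = AᵀXB + S`. -/
noncomputable def SX {ι κ : Type*} [Fintype ι] [Fintype κ]
    (A : Matrix ι ι ℝ) (B S : Matrix ι κ ℝ) (X : Matrix ι ι ℝ) : Matrix ι κ ℝ :=
  Aᵀ * X * B + S

/-- `K_X = R_X† S_Xᵀ`. -/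
noncomputable def KX {ι κ : Type*} [Fintype ι] [Fintype κ]
    (A : Matrix ι ι ℝ) (B S : Matrix ι κ ℝ) (R : Matrix κ κ ℝ) (X : Matrix ι ι ℝ) :
    Matrix κ ι ℝ :=
  mpinv (RX R B X) * (SX A B S X)ᵀ

/-- The closed-loop matrix `A_X = A - B K_X`. -/
noncomputable def AX {ι κ : Type*} [Fintype ι] [Fintype κ]
    (A : Matrix ι ι ℝ) (B S : Matrix ι κ ℝ) (R : Matrix κ κ ℝ) (X : Matrix ι ι ℝ) :
    Matrix ι ι ℝ :=
  A - B * KX A B S R X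

/-- The kernel condition `ker R_X ⊆ ker S_X`. -/
def KerCond {ι κ : Type*} [Fintype ι] [Fintype κ]
    (A : Matrix ι ι ℝ) (B S : Matrix ι κ ℝ) (R : Matrix κ κ ℝ) (X : Matrix ι ι ℝ) : Prop :=
  ∀ v : κ → ℝ, (RX R B X).mulVec v = 0 → (SX A B S X).mulVec v = 0

/-- The Riccati operator `𝔇(X) = X - AᵀXA + S_X R_X† S_Xᵀ - Q`. -/
noncomputable def DOp {ι κ : Type*} [Fintype ι] [Fintype κ]
    (A Q : Matrix ι ι ℝ) (B S : Matrix ι κ ℝ) (R : Matrix κ κ ℝ) (X : Matrix ι ι ℝ) :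
    Matrix ι ι ℝ :=
  X - Aᵀ * X * A + SX A B S X * mpinv (RX R B X) * (SX A B S X)ᵀ - Q

/-- The Riccati map `ℛ(X) = AᵀXA - S_X R_X† S_Xᵀ + Q`. -/
noncomputable def Ricc {ι κ : Type*} [Fintype ι] [Fintype κ]
    (A Q : Matrix ι ι ℝ) (B S : Matrix ι κ ℝ) (R : Matrix κ κ ℝ) (X : Matrix ι ι ℝ) :
    Matrix ι ι ℝ :=
  Aᵀ * X * A - SX A B S X * mpinv (RX R B X) * (SX A B S X)ᵀ + Q

/-- `X` is a symmetric solution of CGDARE(Σ): it is symmetric, satisfies the GDARE and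
the kernel condition `ker R_X ⊆ ker S_X`. -/
def IsCGDARESolution {ι κ : Type*} [Fintype ι] [Fintype κ]
    (A Q : Matrix ι ι ℝ) (B S : Matrix ι κ ℝ) (R : Matrix κ κ ℝ) (X : Matrix ι ι ℝ) : Prop :=
  Xᵀ = X ∧ X = Ricc A Q B S R X ∧ KerCond A B S R X

/-- The matrix `N = [[A, 0, B], [Q, -I, S], [Sᵀ, 0, R]]` of the extended symplectic pencil. -/
noncomputable def Nmat {n m : ℕ} (A Q : Matrix (Fin n) (Fin n) ℝ)
    (B S : Matrix (Fin n) (Fin m) ℝ) (R : Matrix (Fin m) (Fin m) ℝ) :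
    Matrix (Fin n ⊕ (Fin n ⊕ Fin m)) (Fin n ⊕ (Fin n ⊕ Fin m)) ℝ :=
  fromBlocks A (fromCols 0 B) (fromRows Q Sᵀ) (fromBlocks (-1) S 0 R)

/-- The matrix `M = [[I, 0, 0], [0, -Aᵀ, 0], [0, -Bᵀ, 0]]` of the extended symplectic pencil. -/
noncomputable def Mmat {n m : ℕ} (A : Matrix (Fin n) (Fin n) ℝ)
    (B : Matrix (Fin n) (Fin m) ℝ) :
    Matrix (Fin n ⊕ (Fin n ⊕ Fin m)) (Fin n ⊕ (Fin n ⊕ Fin m)) ℝ :=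
  fromBlocks 1 0 0 (fromBlocks (-Aᵀ) 0 (-Bᵀ) 0)

/-!
Write `Δ = X - Y`. Since `S_X - S_Y = AᵀΔB` and `R_X - R_Y = BᵀΔB`, expanding `Δ - A_YᵀΔA_X`
with `A_X = A - BK_X` leaves `Δ - AᵀΔA` plus cross terms in `S_X - S_Y` and `R_X - R_Y`. The kernel
conditions say exactly that `R_X K_X = S_Xᵀ` and `K_Yᵀ R_Y = S_Y` (because `I - R_X†R_X` projects
onto `ker R_X`), and with these the cross terms collapse to `S_X R_X† S_Xᵀ - S_Y R_Y† S_Yᵀ`.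
-/

def IsPenroseInverse {α β : Type*} [Fintype α] [Fintype β]
    (M : Matrix α β ℝ) (P : Matrix β α ℝ) : Prop :=
  M * P * M = M ∧ P * M * P = P ∧ (M * P)ᵀ = M * P ∧ (P * M)ᵀ = P * M

namespace IsPenroseInverse

variable {α β : Type*} [Fintype α] [Fintype β] {M : Matrix α β ℝ} {P : Matrix β α ℝ}

theorem unique {P' : Matrix β α ℝ} (h : IsPenroseInverse M P) (h' : IsPenroseInverse M P') :
    P = P' := by
  obtain ⟨hMPM, hPMP, hMP, hPM⟩ := h
  obtain ⟨hMPM', hPMP', hMP', hPM'⟩ := h'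
  have hleft : M * P = M * P' :=
    calc M * P = (M * P' * (M * P))ᵀ := by rw [← Matrix.mul_assoc, hMPM', hMP]
      _ = M * P * (M * P') := by rw [transpose_mul, hMP, hMP']
      _ = M * P' := by rw [← Matrix.mul_assoc, hMPM]
  have hright : P * M = P' * M :=
    calc P * M = (P * M * (P' * M))ᵀ := by
          rw [Matrix.mul_assoc P M, ← Matrix.mul_assoc M P' M, hMPM', hPM]
      _ = P' * M * (P * M) := by rw [transpose_mul, hPM, hPM']
      _ = P' * M := by rw [Matrix.mul_assoc, ← Matrix.mul_assoc M P M, hMPM]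
  calc P = P * M * P := hPMP.symm
    _ = P' * M * P' := by rw [hright, Matrix.mul_assoc, hleft, ← Matrix.mul_assoc]
    _ = P' := hPMP'

theorem transpose (h : IsPenroseInverse M P) : IsPenroseInverse Mᵀ Pᵀ := by
  obtain ⟨hMPM, hPMP, hMP, hPM⟩ := h
  refine ⟨?_, ?_, ?_, ?_⟩
  · rw [← transpose_mul, ← transpose_mul, ← Matrix.mul_assoc, hMPM]
  · rw [← transpose_mul, ← transpose_mul, ← Matrix.mul_assoc, hPMP]
  · rw [← transpose_mul, transpose_transpose, hPM]
  · rw [← transpose_mul, transpose_transpose, hMP]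

end IsPenroseInverse

theorem IsPenroseInverse.conj_orthogonal {κ : Type*} [Fintype κ] [DecidableEq κ]
    {M P U : Matrix κ κ ℝ} (hU : Uᵀ * U = 1) (h : IsPenroseInverse M P) :
    IsPenroseInverse (U * M * Uᵀ) (U * P * Uᵀ) := by
  obtain ⟨hMPM, hPMP, hMP, hPM⟩ := h
  have hcancel : ∀ N N' : Matrix κ κ ℝ, U * N * Uᵀ * (U * N' * Uᵀ) = U * (N * N') * Uᵀ := by
    intro N N'
    simp only [Matrix.mul_assoc, ← Matrix.mul_assoc Uᵀ U, hU, Matrix.one_mul]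
  have hconjT : ∀ N : Matrix κ κ ℝ, (U * N * Uᵀ)ᵀ = U * Nᵀ * Uᵀ := by
    intro N
    simp only [transpose_mul, transpose_transpose, Matrix.mul_assoc]
  refine ⟨?_, ?_, ?_, ?_⟩
  · rw [hcancel, hcancel, hMPM]
  · rw [hcancel, hcancel, hPMP]
  · rw [hcancel, hconjT, hMP]
  · rw [hcancel, hconjT, hPM]

-- Entrywise inversion works on the zero entries too, since `0⁻¹ = 0`.
theorem isPenroseInverse_diagonal {κ : Type*} [Fintype κ] [DecidableEq κ] (d : κ → ℝ) :
    IsPenroseInverse (diagonal d) (diagonal fun i => (d i)⁻¹) := by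
  have hinv : ∀ a : ℝ, a⁻¹ * a * a⁻¹ = a⁻¹ := fun a => by
    simpa only [inv_inv] using mul_inv_mul_cancel a⁻¹
  refine ⟨?_, ?_, ?_, ?_⟩ <;>
    simp only [diagonal_mul_diagonal, diagonal_transpose, mul_inv_mul_cancel, hinv]

theorem exists_isPenroseInverse_of_transpose_eq {κ : Type*} [Fintype κ] {M : Matrix κ κ ℝ}
    (hM : Mᵀ = M) : ∃ P, IsPenroseInverse M P := by
  classical
  have hH : M.IsHermitian := by rwa [IsHermitian, conjTranspose_eq_transpose_of_trivial]
  set U : Matrix κ κ ℝ := (hH.eigenvectorUnitary : Matrix κ κ ℝ)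
  have hspec : M = U * diagonal hH.eigenvalues * Uᵀ := by
    have := hH.spectral_theorem
    simpa only [Unitary.conjStarAlgAut_apply, RCLike.ofReal_real_eq_id, Function.id_comp,
      star_eq_conjTranspose, conjTranspose_eq_transpose_of_trivial] using this
  have hU : Uᵀ * U = 1 := by
    simpa only [star_eq_conjTranspose, conjTranspose_eq_transpose_of_trivial] using
      (Unitary.mem_iff.mp hH.eigenvectorUnitary.2).1
  rw [hspec]
  exact ⟨_, (isPenroseInverse_diagonal _).conj_orthogonal hU⟩

section mpinv

variable {α β : Type*} [Fintype α] [Fintype β]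

theorem isPenroseInverse_mpinv {M : Matrix α β ℝ} (h : ∃ P, IsPenroseInverse M P) :
    IsPenroseInverse M (mpinv M) := by
  unfold IsPenroseInverse at h ⊢
  rw [mpinv, dif_pos h]
  exact h.choose_spec

theorem isPenroseInverse_mpinv_of_transpose_eq {M : Matrix α α ℝ} (hM : Mᵀ = M) :
    IsPenroseInverse M (mpinv M) :=
  isPenroseInverse_mpinv (exists_isPenroseInverse_of_transpose_eq hM)

theorem transpose_mpinv_of_transpose_eq {M : Matrix α α ℝ} (hM : Mᵀ = M) :
    (mpinv M)ᵀ = mpinv M := by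
  have h := (isPenroseInverse_mpinv_of_transpose_eq hM).transpose
  rw [hM] at h
  exact h.unique (isPenroseInverse_mpinv_of_transpose_eq hM)

end mpinv

theorem Matrix.mul_mul_eq_self_of_ker_le {ι κ μ 𝕜 : Type*} [Fintype κ] [Fintype μ] [Ring 𝕜]
    {N : Matrix ι κ 𝕜} {M : Matrix μ κ 𝕜} {P : Matrix κ μ 𝕜} (hMPM : M * P * M = M)
    (hker : ∀ v, M *ᵥ v = 0 → N *ᵥ v = 0) : N * P * M = N := by
  refine ext_iff_mulVec.mpr fun v => ?_
  have hw : M *ᵥ (v - (P * M) *ᵥ v) = 0 := by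
    rw [mulVec_sub, mulVec_mulVec, ← Matrix.mul_assoc, hMPM, sub_self]
  have := hker _ hw
  rwa [mulVec_sub, mulVec_mulVec, ← Matrix.mul_assoc, sub_eq_zero, eq_comm] at this

section Riccati

variable {ι κ : Type*} [Fintype ι] [Fintype κ]
  {A X Y : Matrix ι ι ℝ} {B S : Matrix ι κ ℝ} {R : Matrix κ κ ℝ}

theorem transpose_RX (hR : Rᵀ = R) (hX : Xᵀ = X) : (RX R B X)ᵀ = RX R B X := by
  simp only [RX, transpose_add, transpose_mul, transpose_transpose, hR, hX, Matrix.mul_assoc]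

theorem SX_sub_SX : SX A B S X - SX A B S Y = Aᵀ * (X - Y) * B := by
  simp only [SX, Matrix.mul_sub, Matrix.sub_mul]
  abel

theorem RX_sub_RX : RX R B X - RX R B Y = Bᵀ * (X - Y) * B := by
  simp only [RX, Matrix.mul_sub, Matrix.sub_mul]
  abel

theorem transpose_KX (hR : Rᵀ = R) (hX : Xᵀ = X) :
    (KX A B S R X)ᵀ = SX A B S X * mpinv (RX R B X) := by
  rw [KX, transpose_mul, transpose_transpose, transpose_mpinv_of_transpose_eq (transpose_RX hR hX)]

theorem KerCond.transpose_KX_mul_RX (hk : KerCond A B S R X) (hR : Rᵀ = R) (hX : Xᵀ = X) :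
    (KX A B S R X)ᵀ * RX R B X = SX A B S X := by
  rw [transpose_KX hR hX]
  exact mul_mul_eq_self_of_ker_le
    (isPenroseInverse_mpinv_of_transpose_eq (transpose_RX hR hX)).1 hk

theorem KerCond.RX_mul_KX (hk : KerCond A B S R X) (hR : Rᵀ = R) (hX : Xᵀ = X) :
    RX R B X * KX A B S R X = (SX A B S X)ᵀ := by
  rw [← hk.transpose_KX_mul_RX hR hX, transpose_mul, transpose_transpose, transpose_RX hR hX]

theorem DOp_sub_DOp {Q : Matrix ι ι ℝ} (hR : Rᵀ = R) (hX : Xᵀ = X) (hY : Yᵀ = Y)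
    (hkX : KerCond A B S R X) (hkY : KerCond A B S R Y) :
    DOp A Q B S R X - DOp A Q B S R Y = (X - Y) - (AX A B S R Y)ᵀ * (X - Y) * AX A B S R X := by
  have hΔ : (X - Y)ᵀ = X - Y := by rw [transpose_sub, hX, hY]
  calc DOp A Q B S R X - DOp A Q B S R Y
      = (X - Y) - Aᵀ * (X - Y) * A
          + (SX A B S X * KX A B S R X - (KX A B S R Y)ᵀ * (SX A B S Y)ᵀ) := by
        rw [transpose_KX hR hY]
        simp only [DOp, KX, Matrix.mul_assoc, Matrix.mul_sub, Matrix.sub_mul]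
        abel
    _ = (X - Y) - Aᵀ * (X - Y) * A + (SX A B S X - SX A B S Y) * KX A B S R X
          + (KX A B S R Y)ᵀ * (SX A B S X - SX A B S Y)ᵀ
          - (KX A B S R Y)ᵀ * (RX R B X - RX R B Y) * KX A B S R X := by
        simp only [transpose_sub, Matrix.mul_sub, Matrix.sub_mul]
        rw [Matrix.mul_assoc _ (RX R B X), hkX.RX_mul_KX hR hX, hkY.transpose_KX_mul_RX hR hY]
        abel
    _ = (X - Y) - (AX A B S R Y)ᵀ * (X - Y) * AX A B S R X := by
        rw [SX_sub_SX, RX_sub_RX, transpose_mul, transpose_mul, transpose_transpose, hΔ]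
        simp only [AX, transpose_sub, transpose_mul, Matrix.mul_sub, Matrix.sub_mul,
          Matrix.mul_assoc]
        abel

end Riccati

theorem stmt_9_general {n m : ℕ}
    (A Q : Matrix (Fin n) (Fin n) ℝ) (B S : Matrix (Fin n) (Fin m) ℝ)
    (R : Matrix (Fin m) (Fin m) ℝ)
    (hPi : (fromBlocks Q S Sᵀ R).PosSemidef)
    (X Y : Matrix (Fin n) (Fin n) ℝ) (hX : Xᵀ = X) (hY : Yᵀ = Y)
    (hkX : KerCond A B S R X) (hkY : KerCond A B S R Y) :
    DOp A Q B S R X - DOp A Q B S R Y =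
      (X - Y) - (AX A B S R Y)ᵀ * (X - Y) * AX A B S R X := by
  have hR : Rᵀ = R := by
    simpa only [IsHermitian, conjTranspose_eq_transpose_of_trivial] using
      (isHermitian_fromBlocks_iff.mp hPi.isHermitian).2.2.2
  exact DOp_sub_DOp hR hX hY hkX hkY

/-- `𝔇(X) - 𝔇(Y) = Δ - A_Yᵀ Δ A_X` with `Δ = X - Y`. -/
theorem stmt_9 {n m : ℕ} (hn : 0 < n) (hm : 0 < m)
    (A Q : Matrix (Fin n) (Fin n) ℝ) (B S : Matrix (Fin n) (Fin m) ℝ)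
    (R : Matrix (Fin m) (Fin m) ℝ)
    (hPi : (fromBlocks Q S Sᵀ R).PosSemidef)
    (X Y : Matrix (Fin n) (Fin n) ℝ) (hX : Xᵀ = X) (hY : Yᵀ = Y)
    (hkX : KerCond A B S R X) (hkY : KerCond A B S R Y) :
    DOp A Q B S R X - DOp A Q B S R Y =
      (X - Y) - (AX A B S R Y)ᵀ * (X - Y) * AX A B S R X :=
  stmt_9_general A Q B S R hPi X Y hX hY hkX hkY
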